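/- Let M be a CK-model, w a world of M, φ a well-named μ-sentence, and let ρ and ρ' be runs of the evaluation game 𝒢(M, w ⊨ φ). If a position ⟨v, ηX.ψ_X, Q⟩ occurs in ρ and a position ⟨v', ηX.ψ_X, Q'⟩ occurs in ρ' (for the same fixed-point subformula ηX.ψ_X of φ), then Q = Q'; that is, player I has the same role at both positions, so the ownership of each fixed-point formula is well-defined. -/

import Mathlib

set_option linter.unusedVariables false

namespace CKMu

/-- μ-formulas over propositions and propositional variables (both indexed by ℕ). -/
inductive MuForm : Type
  | patom : ℕ → MuForm
  | var : ℕ → MuForm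
  | fls : MuForm
  | and : MuForm → MuForm → MuForm
  | or : MuForm → MuForm → MuForm
  | impl : MuForm → MuForm → MuForm
  | box : MuForm → MuForm
  | dia : MuForm → MuForm
  | mu : ℕ → MuForm → MuForm
  | nu : ℕ → MuForm → MuForm
  deriving DecidableEq

namespace MuForm

/-- `Occ pos X φ` : every occurrence of the variable `X` in `φ` has polarity `pos`
(`true` = positive, `false` = negative). -/
def Occ (pos : Bool) (X : ℕ) : MuForm → Prop
  | patom _ => True
  | var Y => Y = X → pos = true
  | fls => True
  | and φ ψ => Occ pos X φ ∧ Occ pos X ψ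
  | or φ ψ => Occ pos X φ ∧ Occ pos X ψ
  | impl φ ψ => Occ (!pos) X φ ∧ Occ pos X ψ
  | box φ => Occ pos X φ
  | dia φ => Occ pos X φ
  | mu Y φ => Y = X ∨ Occ pos X φ
  | nu Y φ => Y = X ∨ Occ pos X φ

/-- `X` occurs only positively in `φ`. -/
def Positive (X : ℕ) (φ : MuForm) : Prop := Occ true X φ

/-- `X` occurs only negatively in `φ`. -/
def Negative (X : ℕ) (φ : MuForm) : Prop := Occ false X φ

/-- Well-formedness: fixed-point formulas `μX.φ`, `νX.φ` are formed only if `X`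
occurs only positively in `φ`. -/
def WellFormed : MuForm → Prop
  | patom _ => True
  | var _ => True
  | fls => True
  | and φ ψ => WellFormed φ ∧ WellFormed ψ
  | or φ ψ => WellFormed φ ∧ WellFormed ψ
  | impl φ ψ => WellFormed φ ∧ WellFormed ψ
  | box φ => WellFormed φ
  | dia φ => WellFormed φ
  | mu X φ => Positive X φ ∧ WellFormed φ
  | nu X φ => Positive X φ ∧ WellFormed φ

/-- Free variables of a formula. -/
def freeVars : MuForm → Set ℕ
  | patom _ => ∅
  | var X => {X}
  | fls => ∅
  | and φ ψ => freeVars φ ∪ freeVars ψ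
  | or φ ψ => freeVars φ ∪ freeVars ψ
  | impl φ ψ => freeVars φ ∪ freeVars ψ
  | box φ => freeVars φ
  | dia φ => freeVars φ
  | mu X φ => freeVars φ \ {X}
  | nu X φ => freeVars φ \ {X}

/-- A sentence is a formula with no free variables. -/
def IsSentence (φ : MuForm) : Prop := freeVars φ = ∅

/-- The list of subformulas of a formula (with multiplicity; membership is what matters). -/
def subforms : MuForm → List MuForm
  | patom P => [patom P]
  | var X => [var X]
  | fls => [fls]
  | and φ ψ => and φ ψ :: (subforms φ ++ subforms ψ)
  | or φ ψ => or φ ψ :: (subforms φ ++ subforms ψ)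
  | impl φ ψ => impl φ ψ :: (subforms φ ++ subforms ψ)
  | box φ => box φ :: subforms φ
  | dia φ => dia φ :: subforms φ
  | mu X φ => mu X φ :: subforms φ
  | nu X φ => nu X φ :: subforms φ

/-- Every free occurrence of `X` in `φ` is in the scope of a modality. -/
def GuardedIn (X : ℕ) : MuForm → Prop
  | patom _ => True
  | var Y => Y ≠ X
  | fls => True
  | and φ ψ => GuardedIn X φ ∧ GuardedIn X ψ
  | or φ ψ => GuardedIn X φ ∧ GuardedIn X ψ
  | impl φ ψ => GuardedIn X φ ∧ GuardedIn X ψ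
  | box _ => True
  | dia _ => True
  | mu Y φ => Y = X ∨ GuardedIn X φ
  | nu Y φ => Y = X ∨ GuardedIn X φ

/-- A formula is guarded iff for every fixed-point subformula `ηX.ψ` every occurrence of
`X` in `ψ` is in the scope of a modality. -/
def Guarded : MuForm → Prop
  | patom _ => True
  | var _ => True
  | fls => True
  | and φ ψ => Guarded φ ∧ Guarded ψ
  | or φ ψ => Guarded φ ∧ Guarded ψ
  | impl φ ψ => Guarded φ ∧ Guarded ψ
  | box φ => Guarded φ
  | dia φ => Guarded φ
  | mu X φ => GuardedIn X φ ∧ Guarded φ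
  | nu X φ => GuardedIn X φ ∧ Guarded φ

/-- The list of variables bound by fixed-point operators occurring in a formula. -/
def binders : MuForm → List ℕ
  | patom _ => []
  | var _ => []
  | fls => []
  | and φ ψ => binders φ ++ binders ψ
  | or φ ψ => binders φ ++ binders ψ
  | impl φ ψ => binders φ ++ binders ψ
  | box φ => binders φ
  | dia φ => binders φ
  | mu X φ => X :: binders φ
  | nu X φ => X :: binders φ

/-- The list of occurrences of variables in a formula. -/
def varOccs : MuForm → List ℕ
  | patom _ => []
  | var X => [X]
  | fls => []
  | and φ ψ => varOccs φ ++ varOccs ψ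
  | or φ ψ => varOccs φ ++ varOccs ψ
  | impl φ ψ => varOccs φ ++ varOccs ψ
  | box φ => varOccs φ
  | dia φ => varOccs φ
  | mu _ φ => varOccs φ
  | nu _ φ => varOccs φ

/-- Well-bounded: every bound variable occurs only once and is bound by a unique
fixed-point operator. -/
def WellBounded (φ : MuForm) : Prop :=
  (binders φ).Nodup ∧ ∀ X ∈ binders φ, (varOccs φ).count X ≤ 1

/-- Well-named: guarded and well-bounded. -/
def WellNamed (φ : MuForm) : Prop := Guarded φ ∧ WellBounded φ

/-- The (unique, for well-named formulas) fixed-point subformula `ηX.ψ` of a formula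
binding the variable `X`. -/
def binderOf (X : ℕ) : MuForm → Option MuForm
  | patom _ => none
  | var _ => none
  | fls => none
  | and φ ψ => (binderOf X φ).orElse fun _ => binderOf X ψ
  | or φ ψ => (binderOf X φ).orElse fun _ => binderOf X ψ
  | impl φ ψ => (binderOf X φ).orElse fun _ => binderOf X ψ
  | box φ => binderOf X φ
  | dia φ => binderOf X φ
  | mu Y φ => if Y = X then some (mu Y φ) else binderOf X φ
  | nu Y φ => if Y = X then some (nu Y φ) else binderOf X φ

end MuForm

/-- A CK-model: worlds, fallible worlds, intuitionistic relation, modal relation,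
valuation, with the usual requirements. -/
structure CKModel where
  W : Type
  nonempty : Nonempty W
  Fall : Set W
  le : W → W → Prop
  rel : W → W → Prop
  val : ℕ → Set W
  le_refl : ∀ w, le w w
  le_trans : ∀ {w v u}, le w v → le v u → le w u
  fall_le : ∀ {w v}, w ∈ Fall → le w v → v ∈ Fall
  fall_rel : ∀ {w v}, w ∈ Fall → rel w v → v ∈ Fall
  fall_val : ∀ P, Fall ⊆ val P
  val_le : ∀ P {w v}, le w v → w ∈ val P → v ∈ val P

open MuForm

/-- The valuation `‖φ‖^M ⊆ W`, relative to an environment `e` interpreting the free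
propositional variables (the augmented model `M[X↦A]` is `Function.update e X A`).
Least/greatest fixed points are given by the Knaster–Tarski construction. -/
def sat (M : CKModel) (e : ℕ → Set M.W) : MuForm → Set M.W
  | .patom P => M.val P
  | .var X => e X
  | .fls => M.Fall
  | .and φ ψ => sat M e φ ∩ sat M e ψ
  | .or φ ψ => sat M e φ ∪ sat M e ψ
  | .impl φ ψ => {w | ∀ v, M.le w v → v ∈ sat M e φ → v ∈ sat M e ψ}
  | .box φ => {w | ∀ v u, M.le w v → M.rel v u → u ∈ sat M e φ}
  | .dia φ => {w | ∀ v, M.le w v → ∃ u, M.rel v u ∧ u ∈ sat M e φ}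
  | .mu X φ => ⋂₀ {A : Set M.W | sat M (Function.update e X A) φ ⊆ A}
  | .nu X φ => ⋃₀ {A : Set M.W | A ⊆ sat M (Function.update e X A) φ}

/-- The operator `Γ_{φ(X)}(A) := ‖φ‖^{M[X↦A]}`. -/
def Gamma (M : CKModel) (e : ℕ → Set M.W) (X : ℕ) (φ : MuForm) (A : Set M.W) : Set M.W :=
  sat M (Function.update e X A) φ

/-- Interpretation of the local diamond: `‖◇̂φ‖^M = {w | ∃ v, w R v and v ∈ ‖φ‖^M}`. -/
def satHatDia (M : CKModel) (e : ℕ → Set M.W) (φ : MuForm) : Set M.W :=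
  {w | ∃ v, M.rel w v ∧ v ∈ sat M e φ}

/-- The μ-approximants `‖μX^α.φ‖`, by ordinal recursion. -/
noncomputable def muApprox (M : CKModel) (e : ℕ → Set M.W) (X : ℕ) (φ : MuForm)
    (o : Ordinal.{0}) : Set M.W :=
  Ordinal.limitRecOn (motive := fun _ => Set M.W) o
    ∅
    (fun _ ih => Gamma M e X φ ih)
    (fun o _ ih => ⋃ a, ⋃ h : a < o, ih a h)

/-- The ν-approximants `‖νX^α.φ‖`, by ordinal recursion. -/
noncomputable def nuApprox (M : CKModel) (e : ℕ → Set M.W) (X : ℕ) (φ : MuForm)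
    (o : Ordinal.{0}) : Set M.W :=
  Ordinal.limitRecOn (motive := fun _ => Set M.W) o
    Set.univ
    (fun _ ih => Gamma M e X φ ih)
    (fun o _ ih => ⋂ a, ⋂ h : a < o, ih a h)

/-- Validity over all CK-models. -/
def CKValid (φ : MuForm) : Prop :=
  ∀ (M : CKModel) (w : M.W), w ∈ sat M (fun _ => ∅) φ

end CKMu
namespace CKMu

open MuForm

/-- The two roles: Verifier and Refuter. -/
inductive Role : Type
  | V : Role
  | R : Role
  deriving DecidableEq

/-- The dual role. -/
def Role.dual : Role → Role
  | .V => .R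
  | .R => .V

/-- Formula components of game positions: plain formulas, local diamonds `◇̂ψ`,
and auxiliary implication positions `ψ?θ`. -/
inductive GForm : Type
  | fm : MuForm → GForm
  | hdia : MuForm → GForm
  | query : MuForm → MuForm → GForm
  deriving DecidableEq

/-- A position of the evaluation game: a world, a (game) formula, and the role
currently held by player I. -/
structure GPos (M : CKModel) where
  world : M.W
  form : GForm
  role : Role

/-- Admissible moves of the evaluation game `𝒢(M, _ ⊨ root)`. -/
inductive Move (M : CKModel) (root : MuForm) : GPos M → GPos M → Prop
  | orl {v ψ θ Q} : Move M root ⟨v, .fm (.or ψ θ), Q⟩ ⟨v, .fm ψ, Q⟩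
  | orr {v ψ θ Q} : Move M root ⟨v, .fm (.or ψ θ), Q⟩ ⟨v, .fm θ, Q⟩
  | andl {v ψ θ Q} : Move M root ⟨v, .fm (.and ψ θ), Q⟩ ⟨v, .fm ψ, Q⟩
  | andr {v ψ θ Q} : Move M root ⟨v, .fm (.and ψ θ), Q⟩ ⟨v, .fm θ, Q⟩
  | imp {v u ψ θ Q} (h : M.le v u) :
      Move M root ⟨v, .fm (.impl ψ θ), Q⟩ ⟨u, .query ψ θ, Q⟩
  | queryl {v ψ θ Q} : Move M root ⟨v, .query ψ θ, Q⟩ ⟨v, .fm ψ, Q.dual⟩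
  | queryr {v ψ θ Q} : Move M root ⟨v, .query ψ θ, Q⟩ ⟨v, .fm θ, Q⟩
  | box {v u u' ψ Q} (h1 : M.le v u) (h2 : M.rel u u') :
      Move M root ⟨v, .fm (.box ψ), Q⟩ ⟨u', .fm ψ, Q⟩
  | dia {v u ψ Q} (h : M.le v u) :
      Move M root ⟨v, .fm (.dia ψ), Q⟩ ⟨u, .hdia ψ, Q⟩
  | hdia {v u ψ Q} (h : M.rel v u) :
      Move M root ⟨v, .hdia ψ, Q⟩ ⟨u, .fm ψ, Q⟩
  | mu {v X ψ Q} : Move M root ⟨v, .fm (.mu X ψ), Q⟩ ⟨v, .fm ψ, Q⟩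
  | nu {v X ψ Q} : Move M root ⟨v, .fm (.nu X ψ), Q⟩ ⟨v, .fm ψ, Q⟩
  | varmu {v X ψ Q} (h : binderOf X root = some (.mu X ψ)) :
      Move M root ⟨v, .fm (.var X), Q⟩ ⟨v, .fm (.mu X ψ), Q⟩
  | varnu {v X ψ Q} (h : binderOf X root = some (.nu X ψ)) :
      Move M root ⟨v, .fm (.var X), Q⟩ ⟨v, .fm (.nu X ψ), Q⟩

open Classical in
/-- The role (Verifier or Refuter) that owns a position, i.e. moves there. -/
noncomputable def moverRole (M : CKModel) (root : MuForm) (p : GPos M) : Role :=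
  match p.form with
  | .fm (.patom P) => if p.world ∈ M.val P then .R else .V
  | .fm .fls => if p.world ∈ M.Fall then .R else .V
  | .fm (.var X) =>
      match binderOf X root with
      | some (.mu _ _) => .V
      | _ => .R
  | .fm (.and _ _) => .R
  | .fm (.or _ _) => .V
  | .fm (.impl _ _) => .R
  | .fm (.box _) => .R
  | .fm (.dia _) => .R
  | .fm (.mu _ _) => .V
  | .fm (.nu _ _) => .R
  | .hdia _ => .V
  | .query _ _ => .V

/-- Player I moves at `p` iff the owning role is the role I currently holds. -/
def IMoves (M : CKModel) (root : MuForm) (p : GPos M) : Prop :=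
  moverRole M root p = p.role

/-- A run of the evaluation game `𝒢(M, w ⊨ root)`: a maximal (finite or infinite)
sequence of positions starting at `⟨w, root, V⟩` and respecting the moves. -/
structure Run (M : CKModel) (root : MuForm) (w : M.W) where
  pos : ℕ → Option (GPos M)
  init : pos 0 = some ⟨w, .fm root, .V⟩
  step : ∀ n p q, pos n = some p → pos (n + 1) = some q → Move M root p q
  maximal : ∀ n p, pos n = some p → pos (n + 1) = none → ∀ q, ¬ Move M root p q
  closed : ∀ n, pos n = none → pos (n + 1) = none

/-- The fixed-point formula `b` is regenerated at stage `n` of the run. -/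
def RegenAt {M : CKModel} {root : MuForm} {w : M.W} (ρ : Run M root w) (n : ℕ)
    (b : MuForm) : Prop :=
  ∃ v X ψ Q, ρ.pos n = some ⟨v, .fm (.var X), Q⟩ ∧ ρ.pos (n + 1) = some ⟨v, .fm b, Q⟩ ∧
    (b = .mu X ψ ∨ b = .nu X ψ)

/-- The fixed-point formula `b` is regenerated infinitely often in the run. -/
def RegenInf {M : CKModel} {root : MuForm} {w : M.W} (ρ : Run M root w) (b : MuForm) : Prop :=
  {n | RegenAt ρ n b}.Infinite

/-- Positions reachable from the initial position of the game. -/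
def Reachable (M : CKModel) (root : MuForm) (w : M.W) (p : GPos M) : Prop :=
  Relation.ReflTransGen (Move M root) ⟨w, .fm root, .V⟩ p

/-- The fixed-point formula `b` is owned by player I: at (some) reachable position
carrying `b`, either I is Verifier and `b` is a ν-formula, or I is Refuter and `b`
is a μ-formula. -/
def OwnedByI (M : CKModel) (root : MuForm) (w : M.W) (b : MuForm) : Prop :=
  ∃ p : GPos M, Reachable M root w p ∧ p.form = .fm b ∧
    ((p.role = .V ∧ ∃ X ψ, b = MuForm.nu X ψ) ∨ (p.role = .R ∧ ∃ X ψ, b = MuForm.mu X ψ))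

/-- Player I wins the run: either the run is finite and its last position is owned by
player II (who thus cannot move), or the run is infinite and the outermost fixed-point
formula regenerated infinitely often is owned by I. -/
def Run.WinsI {M : CKModel} {root : MuForm} {w : M.W} (ρ : Run M root w) : Prop :=
  (∃ n p, ρ.pos n = some p ∧ ρ.pos (n + 1) = none ∧ ¬ IMoves M root p)
  ∨ ((∀ n, ρ.pos n ≠ none) ∧
     ∃ b, RegenInf ρ b ∧ (∀ b', RegenInf ρ b' → b' ∈ subforms b) ∧ OwnedByI M root w b)

/-- Player II wins the run iff player I does not. -/
def Run.WinsII {M : CKModel} {root : MuForm} {w : M.W} (ρ : Run M root w) : Prop :=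
  ¬ ρ.WinsI

/-- A (positional) strategy for player I: at every position owned by I where some move
is available, it outputs an admissible move. -/
def IsStrategyI (M : CKModel) (root : MuForm) (σ : GPos M → GPos M) : Prop :=
  ∀ p, IMoves M root p → (∃ q, Move M root p q) → Move M root p (σ p)

/-- A (positional) strategy for player II. -/
def IsStrategyII (M : CKModel) (root : MuForm) (τ : GPos M → GPos M) : Prop :=
  ∀ p, ¬ IMoves M root p → (∃ q, Move M root p q) → Move M root p (τ p)

/-- Player I follows `σ` in the run `ρ`. -/
def FollowsI {M : CKModel} {root : MuForm} {w : M.W} (σ : GPos M → GPos M)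
    (ρ : Run M root w) : Prop :=
  ∀ n p q, ρ.pos n = some p → ρ.pos (n + 1) = some q → IMoves M root p → q = σ p

/-- Player II follows `τ` in the run `ρ`. -/
def FollowsII {M : CKModel} {root : MuForm} {w : M.W} (τ : GPos M → GPos M)
    (ρ : Run M root w) : Prop :=
  ∀ n p q, ρ.pos n = some p → ρ.pos (n + 1) = some q → ¬ IMoves M root p → q = τ p

/-- `σ` is a (positional) winning strategy for player I in `𝒢(M, w ⊨ root)`. -/
def WinningForI (M : CKModel) (root : MuForm) (w : M.W) (σ : GPos M → GPos M) : Prop :=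
  IsStrategyI M root σ ∧ ∀ ρ : Run M root w, FollowsI σ ρ → ρ.WinsI

/-- `τ` is a (positional) winning strategy for player II in `𝒢(M, w ⊨ root)`. -/
def WinningForII (M : CKModel) (root : MuForm) (w : M.W) (τ : GPos M → GPos M) : Prop :=
  IsStrategyII M root τ ∧ ∀ ρ : Run M root w, FollowsII τ ρ → ρ.WinsII

end CKMu
namespace CKMu

open MuForm in
/-- Annotated list of subformula occurrences with their roles. -/
def ann : MuForm → Role → List (MuForm × Role)
  | .patom P, Q => [(.patom P, Q)]
  | .var X, Q => [(.var X, Q)]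
  | .fls, Q => [(.fls, Q)]
  | .and φ ψ, Q => (.and φ ψ, Q) :: (ann φ Q ++ ann ψ Q)
  | .or φ ψ, Q => (.or φ ψ, Q) :: (ann φ Q ++ ann ψ Q)
  | .impl φ ψ, Q => (.impl φ ψ, Q) :: (ann φ Q.dual ++ ann ψ Q)
  | .box φ, Q => (.box φ, Q) :: ann φ Q
  | .dia φ, Q => (.dia φ, Q) :: ann φ Q
  | .mu X φ, Q => (.mu X φ, Q) :: ann φ Q
  | .nu X φ, Q => (.nu X φ, Q) :: ann φ Q

lemma ann_self (χ : MuForm) (Q : Role) : (χ, Q) ∈ ann χ Q := by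
  cases χ <;> simp [ann]

lemma dual_dual (Q : Role) : Q.dual.dual = Q := by cases Q <;> rfl

/-- One-step successor relation on annotated subformulas. -/
inductive Succ : MuForm × Role → MuForm × Role → Prop
  | andl {ψ θ Q} : Succ (.and ψ θ, Q) (ψ, Q)
  | andr {ψ θ Q} : Succ (.and ψ θ, Q) (θ, Q)
  | orl {ψ θ Q} : Succ (.or ψ θ, Q) (ψ, Q)
  | orr {ψ θ Q} : Succ (.or ψ θ, Q) (θ, Q)
  | impl {ψ θ Q} : Succ (.impl ψ θ, Q) (ψ, Q.dual)
  | impr {ψ θ Q} : Succ (.impl ψ θ, Q) (θ, Q)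
  | box {ψ Q} : Succ (.box ψ, Q) (ψ, Q)
  | dia {ψ Q} : Succ (.dia ψ, Q) (ψ, Q)
  | mu {X ψ Q} : Succ (.mu X ψ, Q) (ψ, Q)
  | nu {X ψ Q} : Succ (.nu X ψ, Q) (ψ, Q)

lemma ann_closed {p q : MuForm × Role} (h : Succ p q) :
    ∀ (χ : MuForm) (Q0 : Role), p ∈ ann χ Q0 → q ∈ ann χ Q0 := by
  intro χ
  induction χ with
  | patom P => intro Q0 hp; simp [ann] at hp; rcases hp with ⟨rfl, rfl⟩; cases h
  | var Y => intro Q0 hp; simp [ann] at hp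
             rcases hp with ⟨rfl, rfl⟩ <;> cases h
  | fls => intro Q0 hp; simp [ann] at hp
           rcases hp with ⟨rfl, rfl⟩ <;> cases h
  | and φ ψ ih1 ih2 =>
      intro Q0 hp
      rcases List.mem_cons.1 hp with heq | hmem
      · subst heq; cases h
        · exact List.mem_cons_of_mem _ (List.mem_append_left _ (ann_self _ _))
        · exact List.mem_cons_of_mem _ (List.mem_append_right _ (ann_self _ _))
      · rcases List.mem_append.1 hmem with h1 | h2
        · exact List.mem_cons_of_mem _ (List.mem_append_left _ (ih1 _ h1))
        · exact List.mem_cons_of_mem _ (List.mem_append_right _ (ih2 _ h2))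
  | or φ ψ ih1 ih2 =>
      intro Q0 hp
      rcases List.mem_cons.1 hp with heq | hmem
      · subst heq; cases h
        · exact List.mem_cons_of_mem _ (List.mem_append_left _ (ann_self _ _))
        · exact List.mem_cons_of_mem _ (List.mem_append_right _ (ann_self _ _))
      · rcases List.mem_append.1 hmem with h1 | h2
        · exact List.mem_cons_of_mem _ (List.mem_append_left _ (ih1 _ h1))
        · exact List.mem_cons_of_mem _ (List.mem_append_right _ (ih2 _ h2))
  | impl φ ψ ih1 ih2 =>
      intro Q0 hp
      rcases List.mem_cons.1 hp with heq | hmem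
      · subst heq; cases h
        · exact List.mem_cons_of_mem _ (List.mem_append_left _ (ann_self _ _))
        · exact List.mem_cons_of_mem _ (List.mem_append_right _ (ann_self _ _))
      · rcases List.mem_append.1 hmem with h1 | h2
        · exact List.mem_cons_of_mem _ (List.mem_append_left _ (ih1 _ h1))
        · exact List.mem_cons_of_mem _ (List.mem_append_right _ (ih2 _ h2))
  | box φ ih =>
      intro Q0 hp
      rcases List.mem_cons.1 hp with heq | hmem
      · subst heq; cases h; exact List.mem_cons_of_mem _ (ann_self _ _)
      · exact List.mem_cons_of_mem _ (ih _ hmem)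
  | dia φ ih =>
      intro Q0 hp
      rcases List.mem_cons.1 hp with heq | hmem
      · subst heq; cases h; exact List.mem_cons_of_mem _ (ann_self _ _)
      · exact List.mem_cons_of_mem _ (ih _ hmem)
  | mu Y φ ih =>
      intro Q0 hp
      rcases List.mem_cons.1 hp with heq | hmem
      · subst heq; cases h; exact List.mem_cons_of_mem _ (ann_self _ _)
      · exact List.mem_cons_of_mem _ (ih _ hmem)
  | nu Y φ ih =>
      intro Q0 hp
      rcases List.mem_cons.1 hp with heq | hmem
      · subst heq; cases h; exact List.mem_cons_of_mem _ (ann_self _ _)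
      · exact List.mem_cons_of_mem _ (ih _ hmem)

open MuForm in
lemma mem_binders_of_binderOf {X : ℕ} :
    ∀ χ : MuForm, ∀ b : MuForm, binderOf X χ = some b → X ∈ binders χ := by
  intro χ
  induction χ with
  | patom P => intro b h; simp [binderOf] at h
  | var Y => intro b h; simp [binderOf] at h
  | fls => intro b h; simp [binderOf] at h
  | and φ ψ ih1 ih2 =>
      intro b h
      simp only [binderOf] at h
      cases hh : binderOf X φ with
      | some c => exact List.mem_append_left _ (ih1 _ hh)
      | none => rw [hh] at h; simp only [Option.orElse, Option.orElse_none] at h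
                exact List.mem_append_right _ (ih2 _ h)
  | or φ ψ ih1 ih2 =>
      intro b h
      simp only [binderOf] at h
      cases hh : binderOf X φ with
      | some c => exact List.mem_append_left _ (ih1 _ hh)
      | none => rw [hh] at h; simp only [Option.orElse, Option.orElse_none] at h
                exact List.mem_append_right _ (ih2 _ h)
  | impl φ ψ ih1 ih2 =>
      intro b h
      simp only [binderOf] at h
      cases hh : binderOf X φ with
      | some c => exact List.mem_append_left _ (ih1 _ hh)
      | none => rw [hh] at h; simp only [Option.orElse, Option.orElse_none] at h
                exact List.mem_append_right _ (ih2 _ h)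
  | box φ ih => intro b h; exact ih _ h
  | dia φ ih => intro b h; exact ih _ h
  | mu Y φ ih =>
      intro b h
      simp only [binderOf] at h
      by_cases hYX : Y = X
      · subst hYX; exact List.mem_cons_self
      · rw [if_neg hYX] at h; exact List.mem_cons_of_mem _ (ih _ h)
  | nu Y φ ih =>
      intro b h
      simp only [binderOf] at h
      by_cases hYX : Y = X
      · subst hYX; exact List.mem_cons_self
      · rw [if_neg hYX] at h; exact List.mem_cons_of_mem _ (ih _ h)

open MuForm in
lemma binderOf_eq_none {X : ℕ} {χ : MuForm} (h : X ∉ binders χ) :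
    binderOf X χ = none := by
  cases hh : binderOf X χ with
  | none => rfl
  | some c => exact absurd (mem_binders_of_binderOf χ _ hh) h

open MuForm in
/-- Polarity determines the role of a variable occurrence. -/
lemma role_of_occ {X : ℕ} {Q : Role} :
    ∀ (χ : MuForm) (Q0 : Role) (pos : Bool), X ∉ binders χ → Occ pos X χ →
      ((MuForm.var X), Q) ∈ ann χ Q0 → Q = (cond pos Q0 Q0.dual) := by
  intro χ
  induction χ with
  | patom P => intro Q0 pos _ _ hmem; simp [ann] at hmem
  | var Y =>
      intro Q0 pos _ hocc hmem
      simp [ann] at hmem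
      obtain ⟨h1, h2⟩ := hmem
      have : pos = true := hocc h1.symm
      subst this; subst h2; rfl
  | fls => intro Q0 pos _ _ hmem; simp [ann] at hmem
  | and φ ψ ih1 ih2 =>
      intro Q0 pos hnb hocc hmem
      simp only [binders, List.mem_append] at hnb
      rcases hocc with ⟨ho1, ho2⟩
      simp only [ann, List.mem_cons, List.mem_append] at hmem
      rcases hmem with heq | h1 | h2
      · simp at heq
      · exact ih1 Q0 pos (fun h => hnb (Or.inl h)) ho1 h1
      · exact ih2 Q0 pos (fun h => hnb (Or.inr h)) ho2 h2
  | or φ ψ ih1 ih2 =>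
      intro Q0 pos hnb hocc hmem
      simp only [binders, List.mem_append] at hnb
      rcases hocc with ⟨ho1, ho2⟩
      simp only [ann, List.mem_cons, List.mem_append] at hmem
      rcases hmem with heq | h1 | h2
      · simp at heq
      · exact ih1 Q0 pos (fun h => hnb (Or.inl h)) ho1 h1
      · exact ih2 Q0 pos (fun h => hnb (Or.inr h)) ho2 h2
  | impl φ ψ ih1 ih2 =>
      intro Q0 pos hnb hocc hmem
      simp only [binders, List.mem_append] at hnb
      rcases hocc with ⟨ho1, ho2⟩
      simp only [ann, List.mem_cons, List.mem_append] at hmem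
      rcases hmem with heq | h1 | h2
      · simp at heq
      · have := ih1 Q0.dual (!pos) (fun h => hnb (Or.inl h)) ho1 h1
        cases pos <;> simpa [dual_dual] using this
      · exact ih2 Q0 pos (fun h => hnb (Or.inr h)) ho2 h2
  | box φ ih =>
      intro Q0 pos hnb hocc hmem
      simp only [ann, List.mem_cons] at hmem
      rcases hmem with heq | h1
      · simp at heq
      · exact ih Q0 pos hnb hocc h1
  | dia φ ih =>
      intro Q0 pos hnb hocc hmem
      simp only [ann, List.mem_cons] at hmem
      rcases hmem with heq | h1
      · simp at heq
      · exact ih Q0 pos hnb hocc h1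
  | mu Y φ ih =>
      intro Q0 pos hnb hocc hmem
      simp only [binders, List.mem_cons] at hnb
      simp only [ann, List.mem_cons] at hmem
      rcases hmem with heq | h1
      · simp at heq
      · rcases hocc with hYX | hocc
        · exact (hnb (Or.inl hYX.symm)).elim
        · exact ih Q0 pos (fun h => hnb (Or.inr h)) hocc h1
  | nu Y φ ih =>
      intro Q0 pos hnb hocc hmem
      simp only [binders, List.mem_cons] at hnb
      simp only [ann, List.mem_cons] at hmem
      rcases hmem with heq | h1
      · simp at heq
      · rcases hocc with hYX | hocc
        · exact (hnb (Or.inl hYX.symm)).elim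
        · exact ih Q0 pos (fun h => hnb (Or.inr h)) hocc h1

open MuForm in
/-- Every occurrence of a variable (not free) sits inside its unique binder,
with the same role. -/
lemma var_role {X : ℕ} {Q : Role} :
    ∀ (χ : MuForm) (Q0 : Role), WellFormed χ → (binders χ).Nodup →
      X ∉ freeVars χ → ((MuForm.var X), Q) ∈ ann χ Q0 →
      ∃ b', binderOf X χ = some b' ∧ (b', Q) ∈ ann χ Q0 := by
  intro χ
  induction χ with
  | patom P => intro Q0 _ _ _ hmem; simp [ann] at hmem
  | var Y =>
      intro Q0 _ _ hfv hmem
      simp [ann] at hmem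
      exact absurd (by simp [freeVars, hmem.1.symm]) hfv
  | fls => intro Q0 _ _ _ hmem; simp [ann] at hmem
  | and φ ψ ih1 ih2 =>
      intro Q0 hwf hnd hfv hmem
      simp only [freeVars, Set.mem_union] at hfv
      push_neg at hfv
      simp only [binders] at hnd
      simp only [ann, List.mem_cons, List.mem_append] at hmem
      rcases hmem with heq | h1 | h2
      · simp at heq
      · obtain ⟨b', hb', hm⟩ := ih1 Q0 hwf.1 hnd.of_append_left hfv.1 h1
        refine ⟨b', ?_, List.mem_cons_of_mem _ (List.mem_append_left _ hm)⟩
        simp [binderOf, hb', Option.orElse]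
      · obtain ⟨b', hb', hm⟩ := ih2 Q0 hwf.2 hnd.of_append_right hfv.2 h2
        have hnone : binderOf X φ = none := by
          apply binderOf_eq_none
          intro hXφ
          exact (List.disjoint_of_nodup_append hnd) hXφ
            (mem_binders_of_binderOf ψ _ hb')
        refine ⟨b', ?_, List.mem_cons_of_mem _ (List.mem_append_right _ hm)⟩
        simp [binderOf, hnone, Option.orElse, hb']
  | or φ ψ ih1 ih2 =>
      intro Q0 hwf hnd hfv hmem
      simp only [freeVars, Set.mem_union] at hfv
      push_neg at hfv
      simp only [binders] at hnd
      simp only [ann, List.mem_cons, List.mem_append] at hmem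
      rcases hmem with heq | h1 | h2
      · simp at heq
      · obtain ⟨b', hb', hm⟩ := ih1 Q0 hwf.1 hnd.of_append_left hfv.1 h1
        refine ⟨b', ?_, List.mem_cons_of_mem _ (List.mem_append_left _ hm)⟩
        simp [binderOf, hb', Option.orElse]
      · obtain ⟨b', hb', hm⟩ := ih2 Q0 hwf.2 hnd.of_append_right hfv.2 h2
        have hnone : binderOf X φ = none := by
          apply binderOf_eq_none
          intro hXφ
          exact (List.disjoint_of_nodup_append hnd) hXφ
            (mem_binders_of_binderOf ψ _ hb')
        refine ⟨b', ?_, List.mem_cons_of_mem _ (List.mem_append_right _ hm)⟩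
        simp [binderOf, hnone, Option.orElse, hb']
  | impl φ ψ ih1 ih2 =>
      intro Q0 hwf hnd hfv hmem
      simp only [freeVars, Set.mem_union] at hfv
      push_neg at hfv
      simp only [binders] at hnd
      simp only [ann, List.mem_cons, List.mem_append] at hmem
      rcases hmem with heq | h1 | h2
      · simp at heq
      · obtain ⟨b', hb', hm⟩ := ih1 Q0.dual hwf.1 hnd.of_append_left hfv.1 h1
        refine ⟨b', ?_, List.mem_cons_of_mem _ (List.mem_append_left _ hm)⟩
        simp [binderOf, hb', Option.orElse]
      · obtain ⟨b', hb', hm⟩ := ih2 Q0 hwf.2 hnd.of_append_right hfv.2 h2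
        have hnone : binderOf X φ = none := by
          apply binderOf_eq_none
          intro hXφ
          exact (List.disjoint_of_nodup_append hnd) hXφ
            (mem_binders_of_binderOf ψ _ hb')
        refine ⟨b', ?_, List.mem_cons_of_mem _ (List.mem_append_right _ hm)⟩
        simp [binderOf, hnone, Option.orElse, hb']
  | box φ ih =>
      intro Q0 hwf hnd hfv hmem
      simp only [ann, List.mem_cons] at hmem
      rcases hmem with heq | h1
      · simp at heq
      · obtain ⟨b', hb', hm⟩ := ih Q0 hwf hnd hfv h1
        exact ⟨b', hb', List.mem_cons_of_mem _ hm⟩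
  | dia φ ih =>
      intro Q0 hwf hnd hfv hmem
      simp only [ann, List.mem_cons] at hmem
      rcases hmem with heq | h1
      · simp at heq
      · obtain ⟨b', hb', hm⟩ := ih Q0 hwf hnd hfv h1
        exact ⟨b', hb', List.mem_cons_of_mem _ hm⟩
  | mu Y φ ih =>
      intro Q0 hwf hnd hfv hmem
      simp only [binders, List.nodup_cons] at hnd
      simp only [ann, List.mem_cons] at hmem
      rcases hmem with heq | h1
      · simp at heq
      · by_cases hYX : Y = X
        · subst hYX
          have hQ : Q = Q0 := role_of_occ φ Q0 true hnd.1 hwf.1 h1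
          subst hQ
          exact ⟨.mu Y φ, by simp [binderOf], List.mem_cons_self⟩
        · have hfv' : X ∉ freeVars φ := by
            intro hx
            exact hfv (by simp [freeVars, hx, Ne.symm hYX])
          obtain ⟨b', hb', hm⟩ := ih Q0 hwf.2 hnd.2 hfv' h1
          exact ⟨b', by simp [binderOf, hYX, hb'], List.mem_cons_of_mem _ hm⟩
  | nu Y φ ih =>
      intro Q0 hwf hnd hfv hmem
      simp only [binders, List.nodup_cons] at hnd
      simp only [ann, List.mem_cons] at hmem
      rcases hmem with heq | h1
      · simp at heq
      · by_cases hYX : Y = X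
        · subst hYX
          have hQ : Q = Q0 := role_of_occ φ Q0 true hnd.1 hwf.1 h1
          subst hQ
          exact ⟨.nu Y φ, by simp [binderOf], List.mem_cons_self⟩
        · have hfv' : X ∉ freeVars φ := by
            intro hx
            exact hfv (by simp [freeVars, hx, Ne.symm hYX])
          obtain ⟨b', hb', hm⟩ := ih Q0 hwf.2 hnd.2 hfv' h1
          exact ⟨b', by simp [binderOf, hYX, hb'], List.mem_cons_of_mem _ hm⟩

open MuForm in
lemma mem_ann_binders {X : ℕ} {b : MuForm}
    (hb : (∃ ψ, b = MuForm.mu X ψ) ∨ (∃ ψ, b = MuForm.nu X ψ)) :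
    ∀ (χ : MuForm) (Q0 Q : Role), (b, Q) ∈ ann χ Q0 → X ∈ binders χ := by
  intro χ
  induction χ with
  | patom P => intro Q0 Q hm; rcases hb with ⟨ψ, rfl⟩ | ⟨ψ, rfl⟩ <;> simp [ann] at hm
  | var Y => intro Q0 Q hm; rcases hb with ⟨ψ, rfl⟩ | ⟨ψ, rfl⟩ <;> simp [ann] at hm
  | fls => intro Q0 Q hm; rcases hb with ⟨ψ, rfl⟩ | ⟨ψ, rfl⟩ <;> simp [ann] at hm
  | and φ ψ ih1 ih2 =>
      intro Q0 Q hm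
      simp only [ann, List.mem_cons, List.mem_append] at hm
      simp only [binders, List.mem_append]
      rcases hm with heq | h1 | h2
      · rcases hb with ⟨ψ', hb'⟩ | ⟨ψ', hb'⟩ <;> subst hb' <;> simp at heq
      · exact Or.inl (ih1 _ _ h1)
      · exact Or.inr (ih2 _ _ h2)
  | or φ ψ ih1 ih2 =>
      intro Q0 Q hm
      simp only [ann, List.mem_cons, List.mem_append] at hm
      simp only [binders, List.mem_append]
      rcases hm with heq | h1 | h2
      · rcases hb with ⟨ψ', hb'⟩ | ⟨ψ', hb'⟩ <;> subst hb' <;> simp at heq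
      · exact Or.inl (ih1 _ _ h1)
      · exact Or.inr (ih2 _ _ h2)
  | impl φ ψ ih1 ih2 =>
      intro Q0 Q hm
      simp only [ann, List.mem_cons, List.mem_append] at hm
      simp only [binders, List.mem_append]
      rcases hm with heq | h1 | h2
      · rcases hb with ⟨ψ', hb'⟩ | ⟨ψ', hb'⟩ <;> subst hb' <;> simp at heq
      · exact Or.inl (ih1 _ _ h1)
      · exact Or.inr (ih2 _ _ h2)
  | box φ ih =>
      intro Q0 Q hm
      simp only [ann, List.mem_cons] at hm
      rcases hm with heq | h1
      · rcases hb with ⟨ψ', hb'⟩ | ⟨ψ', hb'⟩ <;> subst hb' <;> simp at heq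
      · exact ih _ _ h1
  | dia φ ih =>
      intro Q0 Q hm
      simp only [ann, List.mem_cons] at hm
      rcases hm with heq | h1
      · rcases hb with ⟨ψ', hb'⟩ | ⟨ψ', hb'⟩ <;> subst hb' <;> simp at heq
      · exact ih _ _ h1
  | mu Y φ ih =>
      intro Q0 Q hm
      simp only [ann, List.mem_cons] at hm
      simp only [binders, List.mem_cons]
      rcases hm with heq | h1
      · rcases hb with ⟨ψ', hb'⟩ | ⟨ψ', hb'⟩ <;> subst hb' <;>
          simp only [Prod.mk.injEq, MuForm.mu.injEq, MuForm.nu.injEq,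
            reduceCtorEq, false_and] at heq <;>
          exact Or.inl heq.1.1
      · exact Or.inr (ih _ _ h1)
  | nu Y φ ih =>
      intro Q0 Q hm
      simp only [ann, List.mem_cons] at hm
      simp only [binders, List.mem_cons]
      rcases hm with heq | h1
      · rcases hb with ⟨ψ', hb'⟩ | ⟨ψ', hb'⟩ <;> subst hb' <;>
          simp only [Prod.mk.injEq, MuForm.mu.injEq, MuForm.nu.injEq,
            reduceCtorEq, false_and] at heq <;>
          exact Or.inl heq.1.1
      · exact Or.inr (ih _ _ h1)

open MuForm in
/-- The role of a fixed-point subformula in a well-bounded formula is unique. -/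
lemma unique_role {X : ℕ} {b : MuForm}
    (hb : (∃ ψ, b = MuForm.mu X ψ) ∨ (∃ ψ, b = MuForm.nu X ψ)) :
    ∀ (χ : MuForm) (Q0 Q Q' : Role), (binders χ).Nodup →
      (b, Q) ∈ ann χ Q0 → (b, Q') ∈ ann χ Q0 → Q = Q' := by
  intro χ
  induction χ with
  | patom P => intro Q0 Q Q' _ hm; rcases hb with ⟨ψ, rfl⟩ | ⟨ψ, rfl⟩ <;> simp [ann] at hm
  | var Y => intro Q0 Q Q' _ hm; rcases hb with ⟨ψ, rfl⟩ | ⟨ψ, rfl⟩ <;> simp [ann] at hm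
  | fls => intro Q0 Q Q' _ hm; rcases hb with ⟨ψ, rfl⟩ | ⟨ψ, rfl⟩ <;> simp [ann] at hm
  | and φ ψ ih1 ih2 =>
      intro Q0 Q Q' hnd hm hm'
      simp only [binders] at hnd
      simp only [ann, List.mem_cons, List.mem_append] at hm hm'
      have hne : ∀ R : Role, ¬ ((b, R) = ((MuForm.and φ ψ), Q0)) := by
        intro R h; rcases hb with ⟨ψ', rfl⟩ | ⟨ψ', rfl⟩ <;> simp at h
      rcases hm with heq | h1 | h2
      · exact absurd heq (hne Q)
      · rcases hm' with heq | h1' | h2'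
        · exact absurd heq (hne Q')
        · exact ih1 _ _ _ hnd.of_append_left h1 h1'
        · exact absurd (mem_ann_binders hb ψ _ _ h2')
            ((List.disjoint_of_nodup_append hnd) (mem_ann_binders hb φ _ _ h1))
      · rcases hm' with heq | h1' | h2'
        · exact absurd heq (hne Q')
        · exact absurd (mem_ann_binders hb ψ _ _ h2)
            ((List.disjoint_of_nodup_append hnd) (mem_ann_binders hb φ _ _ h1'))
        · exact ih2 _ _ _ hnd.of_append_right h2 h2'
  | or φ ψ ih1 ih2 =>
      intro Q0 Q Q' hnd hm hm'
      simp only [binders] at hnd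
      simp only [ann, List.mem_cons, List.mem_append] at hm hm'
      have hne : ∀ R : Role, ¬ ((b, R) = ((MuForm.or φ ψ), Q0)) := by
        intro R h; rcases hb with ⟨ψ', rfl⟩ | ⟨ψ', rfl⟩ <;> simp at h
      rcases hm with heq | h1 | h2
      · exact absurd heq (hne Q)
      · rcases hm' with heq | h1' | h2'
        · exact absurd heq (hne Q')
        · exact ih1 _ _ _ hnd.of_append_left h1 h1'
        · exact absurd (mem_ann_binders hb ψ _ _ h2')
            ((List.disjoint_of_nodup_append hnd) (mem_ann_binders hb φ _ _ h1))
      · rcases hm' with heq | h1' | h2'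
        · exact absurd heq (hne Q')
        · exact absurd (mem_ann_binders hb ψ _ _ h2)
            ((List.disjoint_of_nodup_append hnd) (mem_ann_binders hb φ _ _ h1'))
        · exact ih2 _ _ _ hnd.of_append_right h2 h2'
  | impl φ ψ ih1 ih2 =>
      intro Q0 Q Q' hnd hm hm'
      simp only [binders] at hnd
      simp only [ann, List.mem_cons, List.mem_append] at hm hm'
      have hne : ∀ R : Role, ¬ ((b, R) = ((MuForm.impl φ ψ), Q0)) := by
        intro R h; rcases hb with ⟨ψ', rfl⟩ | ⟨ψ', rfl⟩ <;> simp at h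
      rcases hm with heq | h1 | h2
      · exact absurd heq (hne Q)
      · rcases hm' with heq | h1' | h2'
        · exact absurd heq (hne Q')
        · exact ih1 _ _ _ hnd.of_append_left h1 h1'
        · exact absurd (mem_ann_binders hb ψ _ _ h2')
            ((List.disjoint_of_nodup_append hnd) (mem_ann_binders hb φ _ _ h1))
      · rcases hm' with heq | h1' | h2'
        · exact absurd heq (hne Q')
        · exact absurd (mem_ann_binders hb ψ _ _ h2)
            ((List.disjoint_of_nodup_append hnd) (mem_ann_binders hb φ _ _ h1'))
        · exact ih2 _ _ _ hnd.of_append_right h2 h2'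
  | box φ ih =>
      intro Q0 Q Q' hnd hm hm'
      simp only [ann, List.mem_cons] at hm hm'
      have hne : ∀ R : Role, ¬ ((b, R) = ((MuForm.box φ), Q0)) := by
        intro R h; rcases hb with ⟨ψ', rfl⟩ | ⟨ψ', rfl⟩ <;> simp at h
      rcases hm with heq | h1
      · exact absurd heq (hne Q)
      rcases hm' with heq | h1'
      · exact absurd heq (hne Q')
      exact ih _ _ _ hnd h1 h1'
  | dia φ ih =>
      intro Q0 Q Q' hnd hm hm'
      simp only [ann, List.mem_cons] at hm hm'
      have hne : ∀ R : Role, ¬ ((b, R) = ((MuForm.dia φ), Q0)) := by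
        intro R h; rcases hb with ⟨ψ', rfl⟩ | ⟨ψ', rfl⟩ <;> simp at h
      rcases hm with heq | h1
      · exact absurd heq (hne Q)
      rcases hm' with heq | h1'
      · exact absurd heq (hne Q')
      exact ih _ _ _ hnd h1 h1'
  | mu Y φ ih =>
      intro Q0 Q Q' hnd hm hm'
      simp only [binders, List.nodup_cons] at hnd
      simp only [ann, List.mem_cons] at hm hm'
      rcases hm with heq | h1
      · rcases hm' with heq' | h1'
        · exact (congrArg Prod.snd heq).trans (congrArg Prod.snd heq').symm
        · exfalso
          have hbx : b = MuForm.mu Y φ := congrArg Prod.fst heq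
          have hYX : Y = X := by
            rcases hb with ⟨ψ', hb'⟩ | ⟨ψ', hb'⟩ <;> rw [hb'] at hbx <;>
              injection hbx <;> omega
          exact hnd.1 (hYX ▸ mem_ann_binders hb φ _ _ h1')
      · rcases hm' with heq' | h1'
        · exfalso
          have hbx : b = MuForm.mu Y φ := congrArg Prod.fst heq'
          have hYX : Y = X := by
            rcases hb with ⟨ψ', hb'⟩ | ⟨ψ', hb'⟩ <;> rw [hb'] at hbx <;>
              injection hbx <;> omega
          exact hnd.1 (hYX ▸ mem_ann_binders hb φ _ _ h1)
        · exact ih _ _ _ hnd.2 h1 h1'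
  | nu Y φ ih =>
      intro Q0 Q Q' hnd hm hm'
      simp only [binders, List.nodup_cons] at hnd
      simp only [ann, List.mem_cons] at hm hm'
      rcases hm with heq | h1
      · rcases hm' with heq' | h1'
        · exact (congrArg Prod.snd heq).trans (congrArg Prod.snd heq').symm
        · exfalso
          have hbx : b = MuForm.nu Y φ := congrArg Prod.fst heq
          have hYX : Y = X := by
            rcases hb with ⟨ψ', hb'⟩ | ⟨ψ', hb'⟩ <;> rw [hb'] at hbx <;>
              injection hbx <;> omega
          exact hnd.1 (hYX ▸ mem_ann_binders hb φ _ _ h1')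
      · rcases hm' with heq' | h1'
        · exfalso
          have hbx : b = MuForm.nu Y φ := congrArg Prod.fst heq'
          have hYX : Y = X := by
            rcases hb with ⟨ψ', hb'⟩ | ⟨ψ', hb'⟩ <;> rw [hb'] at hbx <;>
              injection hbx <;> omega
          exact hnd.1 (hYX ▸ mem_ann_binders hb φ _ _ h1)
        · exact ih _ _ _ hnd.2 h1 h1'

open MuForm in
/-- The game-form invariant carried by run positions. -/
def GInv (root : MuForm) {M : CKModel} (p : GPos M) : Prop :=
  match p.form with
  | .fm ψ => (ψ, p.role) ∈ ann root .V
  | .hdia ψ => (MuForm.dia ψ, p.role) ∈ ann root .V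
  | .query ψ θ => (MuForm.impl ψ θ, p.role) ∈ ann root .V

open MuForm in
lemma run_inv {M : CKModel} {root : MuForm} {w : M.W}
    (hwf : WellFormed root) (hs : IsSentence root) (hwn : WellNamed root)
    (ρ : Run M root w) :
    ∀ n p, ρ.pos n = some p → GInv root p := by
  intro n
  induction n with
  | zero =>
      intro p hp
      rw [ρ.init] at hp
      cases hp
      simpa [GInv] using ann_self root .V
  | succ n ih =>
      intro p hp
      cases hq : ρ.pos n with
      | none => rw [ρ.closed n hq] at hp; cases hp
      | some q =>
          have hmv := ρ.step n q p hq hp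
          have hq' := ih q hq
          have hnd : (binders root).Nodup := hwn.2.1
          have hfvroot : ∀ Y, Y ∉ freeVars root := by
            intro Y hY; rw [hs] at hY; exact hY
          cases hmv with
          | orl => exact ann_closed Succ.orl root .V hq'
          | orr => exact ann_closed Succ.orr root .V hq'
          | andl => exact ann_closed Succ.andl root .V hq'
          | andr => exact ann_closed Succ.andr root .V hq'
          | imp h => exact hq'
          | queryl => exact ann_closed Succ.impl root .V hq'
          | queryr => exact ann_closed Succ.impr root .V hq'
          | box h1 h2 => exact ann_closed Succ.box root .V hq'
          | dia h => exact hq'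
          | hdia h => exact ann_closed Succ.dia root .V hq'
          | mu => exact ann_closed Succ.mu root .V hq'
          | nu => exact ann_closed Succ.nu root .V hq'
          | varmu h =>
              obtain ⟨b', hb', hm⟩ := var_role root .V hwf hnd (hfvroot _) hq'
              rw [h] at hb'
              cases hb'
              exact hm
          | varnu h =>
              obtain ⟨b', hb', hm⟩ := var_role root .V hwf hnd (hfvroot _) hq'
              rw [h] at hb'
              cases hb'
              exact hm

/-- In the evaluation game `𝒢(M, w ⊨ φ)` for a well-named μ-sentence
`φ`, if a position `⟨v, ηX.ψ_X, Q⟩` occurs in a run `ρ` and a position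
`⟨v', ηX.ψ_X, Q'⟩` occurs in a run `ρ'` (same fixed-point subformula of `φ`), then
`Q = Q'`: player I has the same role at both positions, so ownership of each
fixed-point formula is well-defined. -/
theorem ownership_well_defined (M : CKModel) (w : M.W) (φ : MuForm)
    (hwf : MuForm.WellFormed φ) (hs : MuForm.IsSentence φ) (hwn : MuForm.WellNamed φ)
    (ρ ρ' : Run M φ w) (b : MuForm)
    (hb : (∃ X ψ, b = MuForm.mu X ψ) ∨ (∃ X ψ, b = MuForm.nu X ψ))
    (hsub : b ∈ MuForm.subforms φ)
    (v v' : M.W) (Q Q' : Role)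
    (h1 : ∃ n, ρ.pos n = some ⟨v, GForm.fm b, Q⟩)
    (h2 : ∃ n, ρ'.pos n = some ⟨v', GForm.fm b, Q'⟩) :
    Q = Q' := by
  obtain ⟨n, hn⟩ := h1
  obtain ⟨m, hm⟩ := h2
  have g1 : (b, Q) ∈ ann φ Role.V := run_inv hwf hs hwn ρ n _ hn
  have g2 : (b, Q') ∈ ann φ Role.V := run_inv hwf hs hwn ρ' m _ hm
  rcases hb with ⟨X, ψ, hb'⟩ | ⟨X, ψ, hb'⟩
  · exact unique_role (X := X) (Or.inl ⟨ψ, hb'⟩) φ Role.V Q Q' hwn.2.1 g1 g2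
  · exact unique_role (X := X) (Or.inr ⟨ψ, hb'⟩) φ Role.V Q Q' hwn.2.1 g1 g2

end CKMu
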